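/- (Eigenvalue clipping is a Bures–Wasserstein contraction.) Fix 0 < β < ∞. For a d×d real symmetric positive semidefinite matrix Σ with spectral decomposition Σ = ∑_{i=1}^d λᵢ uᵢ uᵢᵀ, define clip^β Σ := ∑_{i=1}^d min(λᵢ, β) uᵢ uᵢᵀ. Then for all d×d real symmetric positive semidefinite matrices X and Y, W₂(clip^β X, clip^β Y) ≤ W₂(X, Y). -/

import Mathlib

open Matrix
open scoped Classical

/-- Symmetric PSD square root of a positive semidefinite matrix (junk value `0` otherwise). -/
noncomputable def msqrt {d : ℕ} (M : Matrix (Fin d) (Fin d) ℝ) : Matrix (Fin d) (Fin d) ℝ :=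
  if h : M.PosSemidef then
    (h.1.eigenvectorUnitary : Matrix (Fin d) (Fin d) ℝ) *
      Matrix.diagonal ((↑) ∘ Real.sqrt ∘ h.1.eigenvalues) *
      (star h.1.eigenvectorUnitary : Matrix (Fin d) (Fin d) ℝ)
  else 0

/-- Optimal transport map `T_{A→B} = A^{-1/2} (A^{1/2} B A^{1/2})^{1/2} A^{-1/2}`. -/
noncomputable def Tmap {d : ℕ} (A B : Matrix (Fin d) (Fin d) ℝ) : Matrix (Fin d) (Fin d) ℝ :=
  (msqrt A)⁻¹ * msqrt (msqrt A * B * msqrt A) * (msqrt A)⁻¹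

/-- Squared Bures–Wasserstein distance `tr(A + B - 2 (A^{1/2} B A^{1/2})^{1/2})`. -/
noncomputable def W2sq {d : ℕ} (A B : Matrix (Fin d) (Fin d) ℝ) : ℝ :=
  (A + B - (2 : ℝ) • msqrt (msqrt A * B * msqrt A)).trace

/-- Bures–Wasserstein distance. -/
noncomputable def W2 {d : ℕ} (A B : Matrix (Fin d) (Fin d) ℝ) : ℝ :=
  Real.sqrt (W2sq A B)

/-- Smallest eigenvalue of a (hermitian) matrix. -/
noncomputable def lamMin {d : ℕ} (M : Matrix (Fin d) (Fin d) ℝ) : ℝ :=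
  if h : M.IsHermitian then ⨅ i, h.eigenvalues i else 0

/-- Largest eigenvalue of a (hermitian) matrix. -/
noncomputable def lamMax {d : ℕ} (M : Matrix (Fin d) (Fin d) ℝ) : ℝ :=
  if h : M.IsHermitian then ⨆ i, h.eigenvalues i else 0

/-- `Kset a b` : symmetric positive definite matrices with all eigenvalues in `[a, b]`,
expressed via the Loewner order `a • I ⪯ S ⪯ b • I`. -/
def Kset {d : ℕ} (a b : ℝ) : Set (Matrix (Fin d) (Fin d) ℝ) :=
  {S | S.PosDef ∧ (S - a • (1 : Matrix (Fin d) (Fin d) ℝ)).PosSemidef ∧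
    (b • (1 : Matrix (Fin d) (Fin d) ℝ) - S).PosSemidef}

/-- Barycenter functional `F(S) = (1/(2N)) ∑ᵢ W₂²(S, Σᵢ)`. -/
noncomputable def Fbar {d N : ℕ} (Ss : Fin N → Matrix (Fin d) (Fin d) ℝ)
    (S : Matrix (Fin d) (Fin d) ℝ) : ℝ :=
  (1 / (2 * (N : ℝ))) * ∑ i, W2sq S (Ss i)

/-- Bures–Wasserstein gradient of the barycenter functional: `I - (1/N) ∑ᵢ T_{S→Σᵢ}`. -/
noncomputable def gradF {d N : ℕ} (Ss : Fin N → Matrix (Fin d) (Fin d) ℝ)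
    (S : Matrix (Fin d) (Fin d) ℝ) : Matrix (Fin d) (Fin d) ℝ :=
  1 - (N : ℝ)⁻¹ • ∑ i, Tmap S (Ss i)

/-- `‖A‖_S² = tr(A S A)`. -/
noncomputable def normAtSq {d : ℕ} (A S : Matrix (Fin d) (Fin d) ℝ) : ℝ :=
  (A * S * A).trace

/-- Eigenvalue clipping: if `M = ∑ λᵢ uᵢ uᵢᵀ` then `clipOp b M = ∑ min(λᵢ, b) uᵢ uᵢᵀ`
(junk value `0` for non-hermitian `M`). -/
noncomputable def clipOp {d : ℕ} (b : ℝ) (M : Matrix (Fin d) (Fin d) ℝ) :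
    Matrix (Fin d) (Fin d) ℝ :=
  if h : M.IsHermitian then
    (h.eigenvectorUnitary : Matrix (Fin d) (Fin d) ℝ) *
      Matrix.diagonal (fun i => min (h.eigenvalues i) b) *
      (star h.eigenvectorUnitary : Matrix (Fin d) (Fin d) ℝ)
  else 0

/-!
Write `P = X^{1/2}` and `Q = Y^{1/2}`. The polar decomposition `QP = O (PYP)^{1/2}` makes the
fidelity `tr (PYP)^{1/2}` the maximum of `tr (W Q P)` over orthogonal `W`. A maximiser `W` for
`(X, Y)` is admissible for the clipped pair, so it suffices that
`tr (W Q P) - tr (W Q' P') ≤ (tr X - tr X' + tr Y - tr Y') / 2`.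
In eigenbases `P = U diag p Uᵀ` and `Q = V diag q Vᵀ`, clipping replaces `p, q` by
`p' = min p √β`, `q' = min q √β`, and the left side is `∑ᵢⱼ Gᵢⱼ Hⱼᵢ (pᵢ qⱼ - p'ᵢ q'ⱼ)` with
`G = UᵀWV` and `H = VᵀU` orthogonal. Here `|Gᵢⱼ Hⱼᵢ| ≤ (Gᵢⱼ² + Hⱼᵢ²) / 2`, a doubly stochastic
matrix, while `2 |pq - p'q'| ≤ (p² - p'²) + (q² - q'²)` because `|p' ∓ q'| ≤ |p ∓ q|`.
-/

open scoped MatrixOrder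

namespace Matrix

variable {n : Type*} [Fintype n]

theorem posSemidef_transpose_mul_self (M : Matrix n n ℝ) : (Mᵀ * M).PosSemidef := by
  simpa [conjTranspose_eq_transpose_of_trivial] using posSemidef_conjTranspose_mul_self M

variable [DecidableEq n]

theorem map_sq_mem_doublyStochastic {U : Matrix n n ℝ} (hU : U ∈ orthogonalGroup n ℝ) :
    U.map (· ^ 2) ∈ doublyStochastic ℝ n := by
  refine mem_doublyStochastic_iff_sum.mpr ⟨fun i j => sq_nonneg _, fun i => ?_, fun j => ?_⟩
  · simpa [mul_apply, one_apply, sq] using congr_fun₂ ((mem_orthogonalGroup_iff n ℝ).mp hU) i i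
  · simpa [mul_apply, one_apply, sq] using congr_fun₂ ((mem_orthogonalGroup_iff' n ℝ).mp hU) j j

theorem abs_le_one_of_mem_orthogonalGroup {U : Matrix n n ℝ} (hU : U ∈ orthogonalGroup n ℝ)
    (i j : n) : |U i j| ≤ 1 :=
  sq_le_one_iff_abs_le_one _ |>.mp (le_one_of_mem_doublyStochastic (map_sq_mem_doublyStochastic hU))

theorem sum_mul_le_of_abs_le_of_mem_doublyStochastic {M w c : Matrix n n ℝ} {a b : n → ℝ}
    (hM : M ∈ doublyStochastic ℝ n) (hw : ∀ i j, |w i j| ≤ M i j)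
    (hc : ∀ i j, 2 * |c i j| ≤ a i + b j) :
    ∑ i, ∑ j, w i j * c i j ≤ (∑ i, a i + ∑ j, b j) / 2 := by
  have hterm : ∀ i j, w i j * c i j ≤ (M i j * a i + M i j * b j) / 2 := fun i j => by
    have hM0 := nonneg_of_mem_doublyStochastic hM (i := i) (j := j)
    calc w i j * c i j ≤ |w i j| * |c i j| := by rw [← abs_mul]; exact le_abs_self _
      _ ≤ M i j * ((a i + b j) / 2) :=
        mul_le_mul (hw i j) (by linarith [hc i j]) (abs_nonneg _) hM0
      _ = _ := by ring
  have hrow : ∑ i, ∑ j, M i j * a i = ∑ i, a i := by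
    simp [← Finset.sum_mul, sum_row_of_mem_doublyStochastic hM]
  have hcol : ∑ i, ∑ j, M i j * b j = ∑ j, b j := by
    rw [Finset.sum_comm]
    simp [← Finset.sum_mul, sum_col_of_mem_doublyStochastic hM]
  calc ∑ i, ∑ j, w i j * c i j ≤ ∑ i, ∑ j, (M i j * a i + M i j * b j) / 2 :=
        Finset.sum_le_sum fun i _ => Finset.sum_le_sum fun j _ => hterm i j
    _ = (∑ i, a i + ∑ j, b j) / 2 := by
        simp only [← Finset.sum_div, Finset.sum_add_distrib, hrow, hcol]

theorem IsHermitian.eigenvectorUnitary_mem_orthogonalGroup {A : Matrix n n ℝ}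
    (hA : A.IsHermitian) : (hA.eigenvectorUnitary : Matrix n n ℝ) ∈ orthogonalGroup n ℝ :=
  hA.eigenvectorUnitary.2

theorem IsHermitian.eq_conj_diagonal_eigenvalues {A : Matrix n n ℝ} (hA : A.IsHermitian) :
    A = (hA.eigenvectorUnitary : Matrix n n ℝ) * diagonal hA.eigenvalues
      * (hA.eigenvectorUnitary : Matrix n n ℝ)ᵀ := by
  conv_lhs => rw [hA.spectral_theorem]
  simp [Unitary.conjStarAlgAut_apply, star_eq_conjTranspose, conjTranspose_eq_transpose_of_trivial]

theorem posSemidef_conj_diagonal (U : Matrix n n ℝ) {f : n → ℝ} (hf : ∀ i, 0 ≤ f i) :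
    (U * diagonal f * Uᵀ).PosSemidef := by
  simpa [conjTranspose_eq_transpose_of_trivial] using
    (posSemidef_diagonal_iff.mpr hf).mul_mul_conjTranspose_same U

variable {U : Matrix n n ℝ}

theorem trace_conj_diagonal (hU : U ∈ orthogonalGroup n ℝ) (f : n → ℝ) :
    (U * diagonal f * Uᵀ).trace = ∑ i, f i := by
  rw [trace_mul_comm, ← Matrix.mul_assoc, (mem_orthogonalGroup_iff' n ℝ).mp hU, Matrix.one_mul,
    trace_diagonal]

theorem conj_diagonal_mul_conj_diagonal (hU : U ∈ orthogonalGroup n ℝ) (f g : n → ℝ) :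
    U * diagonal f * Uᵀ * (U * diagonal g * Uᵀ) = U * diagonal (fun i => f i * g i) * Uᵀ := by
  calc U * diagonal f * Uᵀ * (U * diagonal g * Uᵀ)
      = U * diagonal f * (Uᵀ * U) * diagonal g * Uᵀ := by simp only [Matrix.mul_assoc]
    _ = U * diagonal (fun i => f i * g i) * Uᵀ := by
      rw [(mem_orthogonalGroup_iff' n ℝ).mp hU, Matrix.mul_one, Matrix.mul_assoc U,
        diagonal_mul_diagonal]

theorem cfcSqrt_conj_diagonal (hU : U ∈ orthogonalGroup n ℝ) {f : n → ℝ} (hf : ∀ i, 0 ≤ f i) :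
    CFC.sqrt (U * diagonal f * Uᵀ) = U * diagonal (fun i => √(f i)) * Uᵀ := by
  refine CFC.sqrt_unique ?_ (posSemidef_conj_diagonal U fun i => Real.sqrt_nonneg _).nonneg
  rw [conj_diagonal_mul_conj_diagonal hU]
  congr 3
  ext i
  exact Real.mul_self_sqrt (hf i)

theorem transpose_cfcSqrt (M : Matrix n n ℝ) : (CFC.sqrt M)ᵀ = CFC.sqrt M := by
  rw [← conjTranspose_eq_transpose_of_trivial]
  exact (CFC.sqrt_nonneg M).posSemidef.isHermitian

theorem PosSemidef.exists_conj_diagonal {R : Matrix n n ℝ} (hR : R.PosSemidef) :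
    ∃ V ∈ orthogonalGroup n ℝ, ∃ f : n → ℝ, (∀ i, 0 ≤ f i) ∧ R = V * diagonal f * Vᵀ :=
  ⟨_, hR.isHermitian.eigenvectorUnitary_mem_orthogonalGroup, _, hR.eigenvalues_nonneg,
    hR.isHermitian.eq_conj_diagonal_eigenvalues⟩

theorem trace_mul_le_trace_of_mem_orthogonalGroup {Q R : Matrix n n ℝ}
    (hQ : Q ∈ orthogonalGroup n ℝ) (hR : R.PosSemidef) : (Q * R).trace ≤ R.trace := by
  obtain ⟨V, hV, f, hf, rfl⟩ := hR.exists_conj_diagonal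
  have hVQV : Vᵀ * Q * V ∈ orthogonalGroup n ℝ :=
    mul_mem (mul_mem (transpose_mem_unitaryGroup_iff.mpr hV) hQ) hV
  calc (Q * (V * diagonal f * Vᵀ)).trace = (Vᵀ * Q * V * diagonal f).trace := by
        rw [← Matrix.mul_assoc, trace_mul_comm]
        simp only [Matrix.mul_assoc]
    _ = ∑ i, (Vᵀ * Q * V) i i * f i := by simp [trace, mul_diagonal]
    _ ≤ ∑ i, f i := Finset.sum_le_sum fun i _ =>
        mul_le_of_le_one_left (hf i) (abs_le.mp (abs_le_one_of_mem_orthogonalGroup hVQV i i)).2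
    _ = (V * diagonal f * Vᵀ).trace := (trace_conj_diagonal hV f).symm

theorem exists_mem_orthogonalGroup_mul_diagonal {A : Matrix n n ℝ} {D : n → ℝ}
    (hA : Aᵀ * A = diagonal fun i => D i ^ 2) :
    ∃ B ∈ orthogonalGroup n ℝ, A = B * diagonal D := by
  have hcol : ∀ i j, ∑ k, A k i * A k j = if i = j then D i ^ 2 else 0 := fun i j => by
    simpa [mul_apply, diagonal_apply] using congr_fun₂ hA i j
  have hzero : ∀ i, D i = 0 → ∀ k, A k i = 0 := fun i hi k => by
    have hsum : ∑ k, A k i * A k i = 0 := by simp [hcol, hi]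
    exact mul_self_eq_zero.mp
      ((Finset.sum_eq_zero_iff_of_nonneg fun k _ => mul_self_nonneg _).mp hsum k (by simp))
  let v : n → EuclideanSpace ℝ n := fun i => WithLp.toLp 2 fun k => (D i)⁻¹ * A k i
  have hv : Orthonormal ℝ ({i | D i ≠ 0}.domRestrict v) := by
    rw [orthonormal_iff_ite]
    rintro ⟨i, hi : D i ≠ 0⟩ ⟨j, -⟩
    have hinner : inner ℝ (v i) (v j) = (D i)⁻¹ * (D j)⁻¹ * ∑ k, A k i * A k j := by
      simp only [v, PiLp.inner_apply, Finset.mul_sum]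
      exact Finset.sum_congr rfl fun k _ => by simp; ring
    rw [Set.domRestrict_apply, Set.domRestrict_apply, hinner, hcol]
    simp only [Subtype.mk.injEq]
    split_ifs with hij
    · subst hij
      field_simp
    · simp
  obtain ⟨b, hb⟩ := hv.exists_orthonormalBasis_extension_of_card_eq (by simp)
  refine ⟨(EuclideanSpace.basisFun n ℝ).toBasis.toMatrix b,
    (EuclideanSpace.basisFun n ℝ).toMatrix_orthonormalBasis_mem_orthogonal b, ?_⟩
  ext k i
  rw [mul_diagonal, Module.Basis.toMatrix_apply]
  by_cases hi : D i = 0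
  · simp [hi, hzero i hi k]
  · simp [hb i hi, v]
    field_simp

theorem exists_mem_orthogonalGroup_mul_cfcSqrt (M : Matrix n n ℝ) :
    ∃ O ∈ orthogonalGroup n ℝ, M = O * CFC.sqrt (Mᵀ * M) := by
  obtain ⟨V, hV, f, hf, hMM⟩ := (posSemidef_transpose_mul_self M).exists_conj_diagonal
  have hVV : V * Vᵀ = 1 := (mem_orthogonalGroup_iff n ℝ).mp hV
  have hVV' : Vᵀ * V = 1 := (mem_orthogonalGroup_iff' n ℝ).mp hV
  obtain ⟨B, hB, hMV⟩ := exists_mem_orthogonalGroup_mul_diagonal (A := M * V)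
    (D := fun i => √(f i)) <| by
      calc (M * V)ᵀ * (M * V) = Vᵀ * (Mᵀ * M) * V := by simp only [transpose_mul, Matrix.mul_assoc]
        _ = diagonal f := by
          rw [hMM]
          simp only [← Matrix.mul_assoc, hVV', Matrix.one_mul]
          rw [Matrix.mul_assoc, hVV', Matrix.mul_one]
        _ = diagonal fun i => √(f i) ^ 2 := by simp only [Real.sq_sqrt (hf _)]
  refine ⟨B * Vᵀ, mul_mem hB (transpose_mem_unitaryGroup_iff.mpr hV), ?_⟩
  rw [hMM, cfcSqrt_conj_diagonal hV hf]
  calc M = M * V * Vᵀ := by rw [Matrix.mul_assoc, hVV, Matrix.mul_one]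
    _ = B * Vᵀ * (V * diagonal (fun i => √(f i)) * Vᵀ) := by
      rw [hMV]
      simp only [Matrix.mul_assoc]
      rw [← Matrix.mul_assoc Vᵀ V, hVV', Matrix.one_mul]

theorem isGreatest_trace_mul_orthogonalGroup (M : Matrix n n ℝ) :
    IsGreatest ((fun W => (W * M).trace) '' orthogonalGroup n ℝ) (CFC.sqrt (Mᵀ * M)).trace := by
  obtain ⟨O, hO, hM⟩ := exists_mem_orthogonalGroup_mul_cfcSqrt M
  set S := CFC.sqrt (Mᵀ * M)
  refine ⟨⟨Oᵀ, transpose_mem_unitaryGroup_iff.mpr hO, ?_⟩, ?_⟩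
  · simp only [hM, ← Matrix.mul_assoc, (mem_orthogonalGroup_iff' n ℝ).mp hO, Matrix.one_mul]
  · rintro _ ⟨W, hW, rfl⟩
    simp only [hM, ← Matrix.mul_assoc]
    exact trace_mul_le_trace_of_mem_orthogonalGroup (mul_mem hW hO) (CFC.sqrt_nonneg _).posSemidef

theorem trace_mul_conj_diagonal_mul_conj_diagonal (W U V : Matrix n n ℝ) (p q : n → ℝ) :
    (W * (V * diagonal q * Vᵀ * (U * diagonal p * Uᵀ))).trace
      = ∑ i, ∑ j, (Uᵀ * W * V) i j * (Vᵀ * U) j i * (p i * q j) := by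
  calc (W * (V * diagonal q * Vᵀ * (U * diagonal p * Uᵀ))).trace
      = (Uᵀ * W * V * diagonal q * (Vᵀ * U) * diagonal p).trace := by
        rw [show W * (V * diagonal q * Vᵀ * (U * diagonal p * Uᵀ))
            = W * V * diagonal q * Vᵀ * U * diagonal p * Uᵀ by simp only [Matrix.mul_assoc],
          trace_mul_comm]
        simp only [Matrix.mul_assoc]
    _ = _ := by
        generalize Uᵀ * W * V = G
        generalize Vᵀ * U = H
        simp only [trace, diag, mul_diagonal]
        refine Finset.sum_congr rfl fun i _ => ?_
        rw [mul_apply, Finset.sum_mul]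
        simp only [mul_diagonal]
        exact Finset.sum_congr rfl fun j _ => by ring

theorem trace_mul_conj_diagonal_sub_le {U V W : Matrix n n ℝ} (hU : U ∈ orthogonalGroup n ℝ)
    (hV : V ∈ orthogonalGroup n ℝ) (hW : W ∈ orthogonalGroup n ℝ) {p q p' q' : n → ℝ}
    (hsub : ∀ i j, (p' i - q' j) ^ 2 ≤ (p i - q j) ^ 2)
    (hadd : ∀ i j, (p' i + q' j) ^ 2 ≤ (p i + q j) ^ 2) :
    (W * (V * diagonal q * Vᵀ * (U * diagonal p * Uᵀ))).trace
      - (W * (V * diagonal q' * Vᵀ * (U * diagonal p' * Uᵀ))).trace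
      ≤ (∑ i, (p i ^ 2 - p' i ^ 2) + ∑ j, (q j ^ 2 - q' j ^ 2)) / 2 := by
  set G := Uᵀ * W * V
  set H := Vᵀ * U
  have hG : G ∈ orthogonalGroup n ℝ :=
    mul_mem (mul_mem (transpose_mem_unitaryGroup_iff.mpr hU) hW) hV
  have hH : Hᵀ ∈ orthogonalGroup n ℝ :=
    transpose_mem_unitaryGroup_iff.mpr (mul_mem (transpose_mem_unitaryGroup_iff.mpr hV) hU)
  simp only [trace_mul_conj_diagonal_mul_conj_diagonal, ← Finset.sum_sub_distrib, ← mul_sub]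
  refine sum_mul_le_of_abs_le_of_mem_doublyStochastic
    (M := (1 / 2 : ℝ) • G.map (· ^ 2) + (1 / 2 : ℝ) • Hᵀ.map (· ^ 2))
    (w := of fun i j => G i j * H j i) (c := of fun i j => p i * q j - p' i * q' j)
    (convex_doublyStochastic (map_sq_mem_doublyStochastic hG) (map_sq_mem_doublyStochastic hH)
      (by norm_num) (by norm_num) (by norm_num)) (fun i j => ?_) (fun i j => ?_)
  · simp only [of_apply, add_apply, smul_apply, map_apply, transpose_apply, smul_eq_mul, abs_mul]
    nlinarith [two_mul_le_add_sq |G i j| |H j i|, sq_abs (G i j), sq_abs (H j i)]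
  · simp only [of_apply]
    rcases abs_cases (p i * q j - p' i * q' j) with ⟨h, -⟩ | ⟨h, -⟩ <;> rw [h] <;>
      nlinarith [hsub i j, hadd i j]

end Matrix

theorem msqrt_eq_cfcSqrt {d : ℕ} (M : Matrix (Fin d) (Fin d) ℝ) : msqrt M = CFC.sqrt M := by
  by_cases hM : M.PosSemidef
  · conv_rhs => rw [hM.isHermitian.eq_conj_diagonal_eigenvalues]
    rw [cfcSqrt_conj_diagonal hM.isHermitian.eigenvectorUnitary_mem_orthogonalGroup
      hM.eigenvalues_nonneg, msqrt, dif_pos hM, star_eq_conjTranspose,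
      conjTranspose_eq_transpose_of_trivial]
    rfl
  · rw [msqrt, dif_neg hM, CFC.sqrt_of_not_nonneg (mt LE.le.posSemidef hM)]

theorem W2sq_eq_sub_two_mul_trace_cfcSqrt {d : ℕ} (A : Matrix (Fin d) (Fin d) ℝ)
    {B : Matrix (Fin d) (Fin d) ℝ} (hB : B.PosSemidef) :
    W2sq A B = A.trace + B.trace
      - 2 * (CFC.sqrt ((CFC.sqrt B * CFC.sqrt A)ᵀ * (CFC.sqrt B * CFC.sqrt A))).trace := by
  have hBA : (CFC.sqrt B * CFC.sqrt A)ᵀ * (CFC.sqrt B * CFC.sqrt A)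
      = CFC.sqrt A * B * CFC.sqrt A := by
    rw [transpose_mul, transpose_cfcSqrt, transpose_cfcSqrt, Matrix.mul_assoc,
      ← Matrix.mul_assoc (CFC.sqrt B), CFC.sqrt_mul_sqrt_self B hB.nonneg, Matrix.mul_assoc]
  rw [W2sq, msqrt_eq_cfcSqrt, msqrt_eq_cfcSqrt, hBA, trace_sub, trace_add, trace_smul, smul_eq_mul]

theorem Matrix.PosSemidef.exists_conj_diagonal_sq_and_clipOp {d : ℕ} {b : ℝ} (hb : 0 ≤ b)
    {X : Matrix (Fin d) (Fin d) ℝ} (hX : X.PosSemidef) :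
    ∃ U ∈ orthogonalGroup (Fin d) ℝ, ∃ p : Fin d → ℝ, (∀ i, 0 ≤ p i) ∧
      X = U * diagonal (fun i => p i ^ 2) * Uᵀ ∧
      clipOp b X = U * diagonal (fun i => min (p i) √b ^ 2) * Uᵀ := by
  refine ⟨_, hX.isHermitian.eigenvectorUnitary_mem_orthogonalGroup,
    fun i => √(hX.isHermitian.eigenvalues i), fun i => Real.sqrt_nonneg _, ?_, ?_⟩
  · simp only [Real.sq_sqrt (hX.eigenvalues_nonneg _)]
    exact hX.isHermitian.eq_conj_diagonal_eigenvalues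
  · rw [clipOp, dif_pos hX.isHermitian, star_eq_conjTranspose,
      conjTranspose_eq_transpose_of_trivial]
    simp only [← Real.sqrt_monotone.map_min, Real.sq_sqrt (le_min (hX.eigenvalues_nonneg _) hb)]

theorem clipOp_posSemidef {d : ℕ} {b : ℝ} (hb : 0 ≤ b) {X : Matrix (Fin d) (Fin d) ℝ}
    (hX : X.PosSemidef) : (clipOp b X).PosSemidef := by
  obtain ⟨U, -, p, -, -, hclip⟩ := hX.exists_conj_diagonal_sq_and_clipOp hb
  exact hclip ▸ posSemidef_conj_diagonal U fun i => sq_nonneg _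

theorem trace_mul_cfcSqrt_sub_le_of_clipOp {d : ℕ} {b : ℝ} (hb : 0 ≤ b)
    {X Y W : Matrix (Fin d) (Fin d) ℝ} (hX : X.PosSemidef) (hY : Y.PosSemidef)
    (hW : W ∈ orthogonalGroup (Fin d) ℝ) :
    (W * (CFC.sqrt Y * CFC.sqrt X)).trace
      - (W * (CFC.sqrt (clipOp b Y) * CFC.sqrt (clipOp b X))).trace
      ≤ (X.trace - (clipOp b X).trace + (Y.trace - (clipOp b Y).trace)) / 2 := by
  obtain ⟨U, hU, p, hp, hXp, hXc⟩ := hX.exists_conj_diagonal_sq_and_clipOp hb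
  obtain ⟨V, hV, q, hq, hYq, hYc⟩ := hY.exists_conj_diagonal_sq_and_clipOp hb
  rw [hXc, hYc, hXp, hYq, cfcSqrt_conj_diagonal hU fun _ => sq_nonneg _,
    cfcSqrt_conj_diagonal hU fun _ => sq_nonneg _, cfcSqrt_conj_diagonal hV fun _ => sq_nonneg _,
    cfcSqrt_conj_diagonal hV fun _ => sq_nonneg _, trace_conj_diagonal hU, trace_conj_diagonal hU,
    trace_conj_diagonal hV, trace_conj_diagonal hV, ← Finset.sum_sub_distrib,
    ← Finset.sum_sub_distrib]
  simp only [Real.sqrt_sq (hp _), Real.sqrt_sq (hq _),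
    Real.sqrt_sq (le_min (hp _) (Real.sqrt_nonneg b)),
    Real.sqrt_sq (le_min (hq _) (Real.sqrt_nonneg b))]
  refine trace_mul_conj_diagonal_sub_le hU hV hW (fun i j => ?_) (fun i j => ?_)
  · refine sq_le_sq.mpr ((abs_min_sub_min_le_max _ _ _ _).trans ?_)
    simp
  · exact pow_le_pow_left₀ (add_nonneg (le_min (hp i) (Real.sqrt_nonneg b))
      (le_min (hq j) (Real.sqrt_nonneg b))) (add_le_add (min_le_left _ _) (min_le_left _ _)) 2

/-- Eigenvalue clipping is a contraction in the Bures–Wasserstein metric. -/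
theorem clip_is_BW_contraction {d : ℕ} (b : ℝ) (hb : 0 < b)
    (X Y : Matrix (Fin d) (Fin d) ℝ) (hX : X.PosSemidef) (hY : Y.PosSemidef) :
    W2 (clipOp b X) (clipOp b Y) ≤ W2 X Y := by
  refine Real.sqrt_le_sqrt ?_
  rw [W2sq_eq_sub_two_mul_trace_cfcSqrt _ hY,
    W2sq_eq_sub_two_mul_trace_cfcSqrt _ (clipOp_posSemidef hb.le hY)]
  obtain ⟨⟨W, hW, hWXY⟩, -⟩ := isGreatest_trace_mul_orthogonalGroup (CFC.sqrt Y * CFC.sqrt X)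
  have hclip := (isGreatest_trace_mul_orthogonalGroup
    (CFC.sqrt (clipOp b Y) * CFC.sqrt (clipOp b X))).2 ⟨W, hW, rfl⟩
  have hkey := trace_mul_cfcSqrt_sub_le_of_clipOp hb.le hX hY hW
  simp only at hWXY hclip
  linarith
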